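/- arXiv:2512.04836 — 2 statements merged into one kernel-verified Lean document; each statement's English description precedes it below -/
import Mathlib

section
/- Let L(T_{1,n,n}) = D − A be the combinatorial Laplacian matrix of the starlike tree T_{1,n,n} (equivalently, L = M_{T_{1,n,n}}(1)). Then lim_{n→∞} ρ(L(T_{1,n,n})) = (1/3)·(54 + 6√33)^{1/3} + 4/(54 + 6√33)^{1/3} + 2. -/
/-!
On a tree, the signing `x = (-1) ^ depth • w` turns the Laplacian quadratic form of `x` into the
signless one `w ⬝ (D + A) w`, so the problem is of Perron–Frobenius type. Let `λ` be the largest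
root of `λ³ - 6λ² + 8λ - 4` (Cardano's formula gives the constant of the statement) and `r < 1` the
root of `r² - (λ - 2) r + 1`. The positive vector `w` equal to `r ^ depth` except at the pendant
vertex satisfies `(D + A) w ≤ λ w`, with equality except at the two ends of the paths, where the
defect is `O(r ^ n)`. The inequality together with a weighted AM–GM bound on every edge gives
`λ_max ≤ λ`; the near-equality gives the signed vector a Rayleigh quotient `≥ λ - O(r ^ n)`.
-/

open Filter Topology

/-- The deformed Laplacian matrix `M_G(s) = I - s·A + s²·(D - I)` of a finite simple graph. -/
noncomputable def defLap {V : Type*} [Fintype V] [DecidableEq V] (G : SimpleGraph V) (s : ℝ) :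
    Matrix V V ℝ :=
  letI := Classical.decRel G.Adj
  (1 : Matrix V V ℝ) - s • (G.adjMatrix ℝ) +
    s ^ 2 • (Matrix.diagonal (fun v => (G.degree v : ℝ)) - 1)

/-- The largest (real) eigenvalue of a matrix. -/
noncomputable def lamMax {V : Type*} [Fintype V] (M : Matrix V V ℝ) : ℝ :=
  sSup {μ : ℝ | ∃ v : V → ℝ, v ≠ 0 ∧ M.mulVec v = μ • v}

/-- The starlike tree `T_{1,n,n}`: vertex `0` is the center, vertex `1` is a pendant vertex,
vertices `2,…,n+1` and `n+2,…,2n+1` form two pendant paths on `n` vertices each. -/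
def T1nn (n : ℕ) : SimpleGraph (Fin (2 * n + 2)) :=
  SimpleGraph.fromRel (fun i j =>
    ((i : ℕ) = 0 ∧ (j : ℕ) = 1) ∨
    ((i : ℕ) = 0 ∧ (j : ℕ) = 2) ∨
    ((i : ℕ) = 0 ∧ (j : ℕ) = n + 2) ∨
    (2 ≤ (i : ℕ) ∧ (i : ℕ) < n + 1 ∧ (j : ℕ) = (i : ℕ) + 1) ∨
    (n + 2 ≤ (i : ℕ) ∧ (i : ℕ) < 2 * n + 1 ∧ (j : ℕ) = (i : ℕ) + 1))

open Finset Matrix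

theorem Matrix.mem_spectrum_iff_exists_mulVec_eq_smul {K n : Type*} [Field K] [Fintype n]
    [DecidableEq n] {M : Matrix n n K} {μ : K} :
    μ ∈ spectrum K M ↔ ∃ v : n → K, v ≠ 0 ∧ M *ᵥ v = μ • v := by
  rw [← spectrum_toLin', ← Module.End.hasEigenvalue_iff_mem_spectrum]
  constructor
  · intro h
    obtain ⟨v, hv⟩ := h.exists_hasEigenvector
    exact ⟨v, hv.2, by simpa using hv.apply_eq_smul⟩
  · rintro ⟨v, hv, hMv⟩
    exact Module.End.hasEigenvalue_of_hasEigenvector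
      ⟨Module.End.mem_eigenspace_iff.mpr (by simpa using hMv), hv⟩

section lamMax

variable {V : Type*} [Fintype V] [DecidableEq V] {M : Matrix V V ℝ}

theorem lamMax_eq_sSup_spectrum : lamMax M = sSup (spectrum ℝ M) := by
  simp only [lamMax, ← mem_spectrum_iff_exists_mulVec_eq_smul, Set.ofPred_mem_eq]

open scoped MatrixOrder in
theorem Matrix.IsHermitian.dotProduct_mulVec_le_lamMax (hM : M.IsHermitian) (x : V → ℝ) :
    x ⬝ᵥ M *ᵥ x ≤ lamMax M * (x ⬝ᵥ x) := by
  have hle : M ≤ algebraMap ℝ _ (lamMax M) := le_algebraMap_of_spectrum_le (fun μ hμ => by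
    rw [lamMax_eq_sSup_spectrum]
    exact le_csSup M.finite_real_spectrum.bddAbove hμ) hM
  have := (Matrix.le_iff.mp hle).dotProduct_mulVec_nonneg x
  simp only [Algebra.algebraMap_eq_smul_one, sub_mulVec, smul_mulVec, one_mulVec,
    dotProduct_sub, dotProduct_smul, star_trivial, smul_eq_mul] at this
  linarith

theorem Matrix.IsHermitian.lamMax_le [Nonempty V] (hM : M.IsHermitian) {c : ℝ}
    (h : ∀ x, x ⬝ᵥ M *ᵥ x ≤ c * (x ⬝ᵥ x)) : lamMax M ≤ c := by
  refine csSup_le ⟨hM.eigenvalues (Classical.arbitrary V), ?_⟩ fun μ ⟨v, hv, hMv⟩ => ?_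
  · exact mem_spectrum_iff_exists_mulVec_eq_smul.mp (hM.eigenvalues_mem_spectrum_real _)
  · have hpos : 0 < v ⬝ᵥ v := by simpa using dotProduct_star_self_pos_iff.mpr hv
    have := h v
    rw [hMv, dotProduct_smul, smul_eq_mul] at this
    exact le_of_mul_le_mul_right this hpos

end lamMax

namespace SimpleGraph

variable {V : Type*} [Fintype V] (G : SimpleGraph V) [DecidableRel G.Adj]

theorem sum_ite_adj (i : V) {M : Type*} [AddCommMonoid M] (f : V → M) :
    ∑ j, (if G.Adj i j then f j else 0) = ∑ j ∈ G.neighborFinset i, f j := by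
  rw [neighborFinset_eq_filter, Finset.sum_filter]

theorem sum_sum_ite_adj_add_swap {R : Type*} [CommSemiring R] (g : V → V → R) :
    ∑ i, ∑ j, (if G.Adj i j then g i j + g j i else 0)
      = 2 * ∑ i, ∑ j, if G.Adj i j then g i j else 0 := by
  have swap : ∑ i, ∑ j, (if G.Adj i j then g j i else 0)
      = ∑ i, ∑ j, if G.Adj i j then g i j else 0 := by
    rw [Finset.sum_comm]
    exact Finset.sum_congr rfl fun i _ => Finset.sum_congr rfl fun j _ =>
      if_congr (G.adj_comm j i) rfl rfl
  simp only [ite_add_zero, Finset.sum_add_distrib, swap]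
  ring

variable [DecidableEq V]

theorem defLap_one : defLap G 1 = G.lapMatrix ℝ := by
  rw [defLap, Subsingleton.elim (Classical.decRel G.Adj) ‹_›]
  simp [lapMatrix, degMatrix]

theorem dotProduct_lapMatrix_mulVec (x : V → ℝ) :
    x ⬝ᵥ G.lapMatrix ℝ *ᵥ x = (∑ i, ∑ j, if G.Adj i j then (x i - x j) ^ 2 else 0) / 2 := by
  rw [← toLinearMap₂'_apply', lapMatrix_toLinearMap₂']

theorem dotProduct_lapMatrix_mulVec_le {w : V → ℝ} (hw : ∀ i, 0 < w i) {c : ℝ}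
    (hc : ∀ i, ∑ j ∈ G.neighborFinset i, (w i + w j) ≤ c * w i) (x : V → ℝ) :
    x ⬝ᵥ G.lapMatrix ℝ *ᵥ x ≤ c * (x ⬝ᵥ x) := by
  set f : V → V → ℝ := fun i j => x i ^ 2 / w i * (w i + w j)
  have edge : ∀ i j, (x i - x j) ^ 2 ≤ f i j + f j i := fun i j => by
    have hi := hw i; have hj := hw j
    have : f i j + f j i - (x i - x j) ^ 2 = (x i * w j + x j * w i) ^ 2 / (w i * w j) := by
      simp only [f]; field_simp; ring
    nlinarith [div_nonneg (sq_nonneg (x i * w j + x j * w i)) (mul_pos hi hj).le]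
  have vertex : ∀ i, ∑ j, (if G.Adj i j then f i j else 0) ≤ c * x i ^ 2 := fun i => by
    rw [sum_ite_adj, ← Finset.mul_sum]
    calc x i ^ 2 / w i * ∑ j ∈ G.neighborFinset i, (w i + w j)
        ≤ x i ^ 2 / w i * (c * w i) :=
          mul_le_mul_of_nonneg_left (hc i) (div_nonneg (sq_nonneg _) (hw i).le)
      _ = c * x i ^ 2 := by field_simp [(hw i).ne']
  calc x ⬝ᵥ G.lapMatrix ℝ *ᵥ x
      ≤ (∑ i, ∑ j, if G.Adj i j then f i j + f j i else 0) / 2 := by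
        rw [dotProduct_lapMatrix_mulVec]
        gcongr with i _ j _
        split_ifs
        exacts [edge i j, le_rfl]
    _ = ∑ i, ∑ j, if G.Adj i j then f i j else 0 := by
        rw [sum_sum_ite_adj_add_swap]; ring
    _ ≤ ∑ i, c * x i ^ 2 := Finset.sum_le_sum fun i _ => vertex i
    _ = c * (x ⬝ᵥ x) := by simp only [dotProduct, Finset.mul_sum, sq]

theorem dotProduct_lapMatrix_mulVec_of_alternating {w x : V → ℝ}
    (hsq : ∀ i, x i ^ 2 = w i ^ 2) (halt : ∀ i j, G.Adj i j → x i * x j = -(w i * w j)) :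
    x ⬝ᵥ G.lapMatrix ℝ *ᵥ x = ∑ i, w i * ∑ j ∈ G.neighborFinset i, (w i + w j) := by
  set g : V → V → ℝ := fun i j => w i * (w i + w j)
  have edge : ∀ i j, G.Adj i j → (x i - x j) ^ 2 = g i j + g j i :=
    fun i j h => by linear_combination hsq i + hsq j - 2 * halt i j h
  have hsum : ∑ i, ∑ j, (if G.Adj i j then (x i - x j) ^ 2 else 0)
      = ∑ i, ∑ j, if G.Adj i j then g i j + g j i else 0 :=
    Finset.sum_congr rfl fun i _ => Finset.sum_congr rfl fun j _ => by
      split_ifs with h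
      exacts [edge i j h, rfl]
  rw [dotProduct_lapMatrix_mulVec, hsum, sum_sum_ite_adj_add_swap]
  simp only [g, ← Finset.mul_sum, sum_ite_adj]
  ring

end SimpleGraph

noncomputable def cardanoCbrt : ℝ := (54 + 6 * √33) ^ ((1 : ℝ) / 3)

/-- Cardano's formula for the largest root of `λ³ - 6λ² + 8λ - 4` (`limRadius_cubic`). -/
noncomputable def limRadius : ℝ := 1 / 3 * cardanoCbrt + 4 / cardanoCbrt + 2

/-- Forced by the eigen-equation at the center (`center_balance`); by the cubic it is the root in
`(0, 1)` of `r² - (limRadius - 2) r + 1` (`decay_quadratic`). -/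
noncomputable def decay : ℝ := (limRadius ^ 2 - 4 * limRadius + 2) / (2 * (limRadius - 1))

theorem cardanoCbrt_pos : 0 < cardanoCbrt := by unfold cardanoCbrt; positivity

theorem cardanoCbrt_pow_three : cardanoCbrt ^ 3 = 54 + 6 * √33 := by
  rw [cardanoCbrt, ← Real.rpow_natCast, ← Real.rpow_mul (by positivity)]
  norm_num

theorem limRadius_cubic : limRadius ^ 3 - 6 * limRadius ^ 2 + 8 * limRadius - 4 = 0 := by
  have := cardanoCbrt_pos
  rw [limRadius]
  field_simp
  linear_combination (cardanoCbrt ^ 3 - 54 + 6 * √33) * cardanoCbrt_pow_three +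
    36 * Real.sq_sqrt (show (0 : ℝ) ≤ 33 by norm_num)

theorem four_lt_limRadius : 4 < limRadius := by
  have hc := cardanoCbrt_pos
  have h : limRadius - 4 = ((cardanoCbrt - 3) ^ 2 + 3) / (3 * cardanoCbrt) := by
    rw [limRadius]; field_simp; ring
  have : 0 < ((cardanoCbrt - 3) ^ 2 + 3) / (3 * cardanoCbrt) := by positivity
  linarith

theorem decay_pos : 0 < decay := by
  have := four_lt_limRadius
  unfold decay
  apply div_pos <;> nlinarith

theorem decay_lt_one : decay < 1 := by
  have := four_lt_limRadius
  rw [decay, div_lt_one (by linarith)]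
  nlinarith [limRadius_cubic]

theorem center_balance : 3 + 2 * decay + 1 / (limRadius - 1) = limRadius := by
  have : limRadius - 1 ≠ 0 := by linarith [four_lt_limRadius]
  rw [decay]; field_simp; ring

theorem decay_quadratic : decay ^ 2 - (limRadius - 2) * decay + 1 = 0 := by
  have : limRadius - 1 ≠ 0 := by linarith [four_lt_limRadius]
  rw [decay]; field_simp
  linear_combination (-limRadius) * limRadius_cubic

theorem one_le_limRadius_sub_one_mul_decay : 1 ≤ (limRadius - 1) * decay := by
  have h := four_lt_limRadius
  have : 0 ≤ limRadius * (limRadius - 4) * (limRadius - 1) := by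
    apply mul_nonneg (mul_nonneg _ _) _ <;> linarith
  rw [decay, mul_div_assoc', le_div_iff₀ (by linarith)]
  linarith

namespace T1nn

instance (n : ℕ) : DecidableRel (T1nn n).Adj :=
  fun i j => decidable_of_iff' _ (SimpleGraph.fromRel_adj _ i j)

/-- The distance from vertex `k` to the center `0`. -/
def depth (n k : ℕ) : ℕ := if k ≤ 1 then k else if k ≤ n + 1 then k - 1 else k - (n + 1)

/-- The neighbour of a path vertex `k ≥ 2` on the side of the center. -/
def parent (n k : ℕ) : ℕ := if k = 2 ∨ k = n + 2 then 0 else k - 1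

def neighbors (n k : ℕ) : Finset ℕ :=
  if k = 0 then {1, 2, n + 2}
  else if k = 1 then {0}
  else if depth n k < n then {parent n k, k + 1} else {parent n k}

theorem depth_adj {n : ℕ} {i j : Fin (2 * n + 2)} (h : (T1nn n).Adj i j) :
    depth n i + 1 = depth n j ∨ depth n j + 1 = depth n i := by
  simp only [T1nn, SimpleGraph.fromRel_adj, depth] at h ⊢
  split_ifs <;> omega

theorem map_neighborFinset {n : ℕ} (hn : 1 ≤ n) (i : Fin (2 * n + 2)) :
    ((T1nn n).neighborFinset i).map Fin.valEmbedding = neighbors n i := by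
  ext k
  simp only [Finset.mem_map, SimpleGraph.mem_neighborFinset, Fin.valEmbedding_apply]
  obtain ⟨a, ha⟩ := i
  simp only [T1nn, SimpleGraph.fromRel_adj, neighbors, parent, depth, ne_eq, Fin.ext_iff]
  constructor
  · rintro ⟨⟨b, hb⟩, hab, rfl⟩
    simp only at hab
    split_ifs <;> simp <;> omega
  · intro hk
    have hk' : k < 2 * n + 2 := by
      split_ifs at hk <;> simp only [mem_insert, mem_singleton] at hk <;> omega
    refine ⟨⟨k, hk'⟩, ?_, rfl⟩
    simp only
    split_ifs at hk <;> simp only [mem_insert, mem_singleton] at hk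
    all_goals grind

/-- The value at the pendant vertex `1` balances its eigen-equation. -/
noncomputable def weight (n k : ℕ) : ℝ :=
  if k = 1 then 1 / (limRadius - 1) else decay ^ depth n k

noncomputable def signedWeight (n k : ℕ) : ℝ := (-1) ^ depth n k * weight n k

/-- By how much `(D + A) w` falls short of `limRadius • w` at the far end of a path. -/
noncomputable def tipDefect (n : ℕ) : ℝ := limRadius * decay ^ n - (decay ^ n + decay ^ (n - 1))

noncomputable def deficit (n k : ℕ) : ℝ :=
  (if k = n + 1 then tipDefect n else 0) + (if k = 2 * n + 1 then tipDefect n else 0)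

theorem weight_pos (n k : ℕ) : 0 < weight n k := by
  have := four_lt_limRadius
  have := decay_pos
  unfold weight
  split_ifs
  · exact one_div_pos.mpr (by linarith)
  · positivity

theorem weight_of_ne_one {n k : ℕ} (hk : k ≠ 1) : weight n k = decay ^ depth n k := if_neg hk

theorem weight_zero (n : ℕ) : weight n 0 = 1 := by simp [weight, depth]

theorem weight_one (n : ℕ) : weight n 1 = 1 / (limRadius - 1) := if_pos rfl

theorem weight_parent {n k : ℕ} (hk : 2 ≤ k) (hkn : k < 2 * n + 2) :
    weight n (parent n k) = decay ^ (depth n k - 1) := by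
  rw [weight_of_ne_one (by unfold parent; split_ifs <;> omega)]
  unfold parent depth; split_ifs <;> congr 1 <;> omega

theorem weight_succ {n k : ℕ} (hk : 2 ≤ k) (hkn : depth n k < n) :
    weight n (k + 1) = decay ^ (depth n k + 1) := by
  rw [weight_of_ne_one (by omega)]
  unfold depth at *; split_ifs at * <;> congr 1 <;> omega

theorem signedWeight_sq (n k : ℕ) : signedWeight n k ^ 2 = weight n k ^ 2 := by
  rw [signedWeight, mul_pow, ← pow_mul, Even.neg_one_pow ⟨depth n k, by ring⟩, one_mul]

theorem signedWeight_mul_of_adj {n : ℕ} {i j : Fin (2 * n + 2)} (h : (T1nn n).Adj i j) :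
    signedWeight n i * signedWeight n j = -(weight n i * weight n j) := by
  have hsq : ∀ d : ℕ, ((-1 : ℝ) ^ d) ^ 2 = 1 := fun d => by
    rw [← pow_mul, Even.neg_one_pow ⟨d, by ring⟩]
  rcases depth_adj h with h' | h' <;>
  · simp only [signedWeight, ← h', pow_succ]
    linear_combination -(weight n i * weight n j) * hsq _

theorem tipDefect_nonneg {n : ℕ} (hn : 1 ≤ n) : 0 ≤ tipDefect n := by
  obtain ⟨m, rfl⟩ := Nat.exists_eq_add_of_le' hn
  have : tipDefect (m + 1) = decay ^ m * ((limRadius - 1) * decay - 1) := by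
    rw [tipDefect, Nat.add_sub_cancel]; ring
  rw [this]
  exact mul_nonneg (pow_nonneg decay_pos.le m) (by linarith [one_le_limRadius_sub_one_mul_decay])

theorem tipDefect_le (n : ℕ) : tipDefect n ≤ limRadius * decay ^ n := by
  have := decay_pos
  rw [tipDefect]
  linarith [pow_pos this n, pow_pos this (n - 1)]

theorem deficit_nonneg {n : ℕ} (hn : 1 ≤ n) (k : ℕ) : 0 ≤ deficit n k := by
  have := tipDefect_nonneg hn
  unfold deficit
  split_ifs <;> linarith

theorem sum_weight_mul_deficit {n : ℕ} (hn : 1 ≤ n) :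
    ∑ i : Fin (2 * n + 2), weight n i * deficit n i = 2 * decay ^ n * tipDefect n := by
  rw [Fin.sum_univ_eq_sum_range (fun k => weight n k * deficit n k)]
  simp only [deficit, mul_add, mul_ite, mul_zero, sum_add_distrib, sum_ite_eq', mem_range]
  have h1 : depth n (n + 1) = n := by unfold depth; split_ifs <;> omega
  have h2 : depth n (2 * n + 1) = n := by unfold depth; split_ifs <;> omega
  rw [if_pos (by omega), if_pos (by omega), weight_of_ne_one (by omega),
    weight_of_ne_one (by omega), h1, h2]
  ring

theorem sum_neighbors_weight_of_two_le {n a : ℕ} (ha2 : 2 ≤ a) (ha : a < 2 * n + 2) :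
    ∑ k ∈ neighbors n a, (weight n a + weight n k) = limRadius * weight n a - deficit n a := by
  have hd : 1 ≤ depth n a ∧ depth n a ≤ n := by unfold depth; split_ifs <;> omega
  obtain ⟨d, hd'⟩ : ∃ d, depth n a = d + 1 := ⟨depth n a - 1, by omega⟩
  rw [neighbors, if_neg (by omega), if_neg (by omega), weight_of_ne_one (by omega)]
  split_ifs with hleaf
  · have hnt : a ≠ n + 1 ∧ a ≠ 2 * n + 1 := by unfold depth at hleaf; split_ifs at hleaf <;> omega
    rw [sum_pair (by unfold parent; split_ifs <;> omega), weight_parent ha2 ha,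
      weight_succ ha2 hleaf, deficit, if_neg hnt.1, if_neg hnt.2, hd', Nat.add_sub_cancel]
    linear_combination decay ^ d * decay_quadratic
  · have htip : depth n a = n := by omega
    rw [sum_singleton, weight_parent ha2 ha, htip, deficit, tipDefect]
    have : a = n + 1 ∨ a = 2 * n + 1 := by unfold depth at htip; split_ifs at htip <;> omega
    rcases this with rfl | rfl
    · rw [if_pos rfl, if_neg (by omega)]; ring
    · rw [if_neg (by omega), if_pos rfl]; ring

theorem sum_neighbors_weight {n a : ℕ} (hn : 1 ≤ n) (ha : a < 2 * n + 2) :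
    ∑ k ∈ neighbors n a, (weight n a + weight n k) = limRadius * weight n a - deficit n a := by
  have hl : limRadius - 1 ≠ 0 := by linarith [four_lt_limRadius]
  rcases (by omega : a = 0 ∨ a = 1 ∨ 2 ≤ a) with rfl | rfl | ha2
  · have w2 : weight n 2 = decay := by
      rw [weight_of_ne_one (by omega), depth, if_neg (by omega), if_pos (by omega), pow_one]
    have wn2 : weight n (n + 2) = decay := by
      rw [weight_of_ne_one (by omega), depth, if_neg (by omega), if_neg (by omega),
        Nat.add_sub_add_left, pow_one]
    rw [neighbors, if_pos rfl, sum_insert (by simp), sum_pair (by omega), deficit,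
      if_neg (by omega), if_neg (by omega), weight_zero, weight_one, w2, wn2]
    linear_combination center_balance
  · rw [neighbors, if_neg one_ne_zero, if_pos rfl, sum_singleton, deficit, if_neg (by omega),
      if_neg (by omega), weight_zero, weight_one]
    field_simp
    ring
  · exact sum_neighbors_weight_of_two_le ha2 ha

theorem sum_neighborFinset_weight {n : ℕ} (hn : 1 ≤ n) (i : Fin (2 * n + 2)) :
    ∑ j ∈ (T1nn n).neighborFinset i, (weight n i + weight n j)
      = limRadius * weight n i - deficit n i := by
  rw [← sum_neighbors_weight hn i.isLt, ← map_neighborFinset hn i, sum_map]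
  rfl

theorem lamMax_defLap_le {n : ℕ} (hn : 1 ≤ n) : lamMax (defLap (T1nn n) 1) ≤ limRadius := by
  rw [SimpleGraph.defLap_one]
  refine (SimpleGraph.isHermitian_lapMatrix ℝ (T1nn n)).lamMax_le
    (SimpleGraph.dotProduct_lapMatrix_mulVec_le _ (fun i : Fin (2 * n + 2) => weight_pos n i)
      fun i => ?_)
  rw [sum_neighborFinset_weight hn]
  linarith [deficit_nonneg hn i]

theorem dotProduct_lapMatrix_mulVec_signedWeight {n : ℕ} (hn : 1 ≤ n) :
    (fun i : Fin (2 * n + 2) => signedWeight n i) ⬝ᵥ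
        (T1nn n).lapMatrix ℝ *ᵥ (fun i => signedWeight n i)
      = limRadius * ∑ i : Fin (2 * n + 2), weight n i ^ 2 - 2 * decay ^ n * tipDefect n := by
  rw [SimpleGraph.dotProduct_lapMatrix_mulVec_of_alternating (T1nn n) (w := fun i => weight n i)
    (fun i => signedWeight_sq n i) fun i j h => signedWeight_mul_of_adj h,
    ← sum_weight_mul_deficit hn, mul_sum, ← sum_sub_distrib]
  refine sum_congr rfl fun i _ => ?_
  rw [sum_neighborFinset_weight hn]
  ring

theorem one_le_sum_weight_sq (n : ℕ) : 1 ≤ ∑ i : Fin (2 * n + 2), weight n i ^ 2 := by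
  calc (1 : ℝ) = weight n 0 ^ 2 := by rw [weight_zero, one_pow]
    _ ≤ ∑ i : Fin (2 * n + 2), weight n i ^ 2 :=
      single_le_sum (f := fun i : Fin (2 * n + 2) => weight n i ^ 2) (fun i _ => sq_nonneg _)
        (mem_univ ⟨0, by omega⟩)

theorem le_lamMax_defLap {n : ℕ} (hn : 1 ≤ n) :
    limRadius - 2 * limRadius * decay ^ n ≤ lamMax (defLap (T1nn n) 1) := by
  set S := ∑ i : Fin (2 * n + 2), weight n i ^ 2
  have hS : 1 ≤ S := one_le_sum_weight_sq n
  have hxx : (fun i : Fin (2 * n + 2) => signedWeight n i) ⬝ᵥ (fun i => signedWeight n i) = S :=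
    sum_congr rfl fun i _ => by rw [← sq, signedWeight_sq]
  have hrayleigh :
      limRadius * S - 2 * decay ^ n * tipDefect n ≤ lamMax (defLap (T1nn n) 1) * S := by
    have := (SimpleGraph.isHermitian_lapMatrix ℝ (T1nn n)).dotProduct_mulVec_le_lamMax
      fun i => signedWeight n i
    rwa [dotProduct_lapMatrix_mulVec_signedWeight hn, ← SimpleGraph.defLap_one, hxx] at this
  have hdS : tipDefect n ≤ limRadius * S := by
    nlinarith [tipDefect_le n, pow_le_one₀ decay_pos.le decay_lt_one.le (n := n), four_lt_limRadius]
  refine le_of_mul_le_mul_right ?_ (by linarith : 0 < S)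
  nlinarith [mul_nonneg (pow_pos decay_pos n).le (sub_nonneg.2 hdS)]

end T1nn

/-- the spectral radii of the combinatorial Laplacians `L = M_{T_{1,n,n}}(1)`
of the starlike trees `T_{1,n,n}` converge, as `n → ∞`, to
`(1/3)·(54 + 6√33)^{1/3} + 4/(54 + 6√33)^{1/3} + 2`. -/
theorem stmt4 :
    Filter.Tendsto (fun n : ℕ => lamMax (defLap (T1nn n) 1)) Filter.atTop
      (nhds ((1 / 3) * (54 + 6 * Real.sqrt 33) ^ ((1 : ℝ) / 3) +
        4 / (54 + 6 * Real.sqrt 33) ^ ((1 : ℝ) / 3) + 2)) := by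
  change Tendsto _ atTop (𝓝 limRadius)
  have hlow : Tendsto (fun n : ℕ => limRadius - 2 * limRadius * decay ^ n) atTop (𝓝 limRadius) := by
    simpa using (tendsto_pow_atTop_nhds_zero_of_lt_one decay_pos.le decay_lt_one).const_mul
      (2 * limRadius) |>.const_sub limRadius
  refine tendsto_of_tendsto_of_tendsto_of_le_of_le' hlow tendsto_const_nhds ?_ ?_ <;>
    filter_upwards [eventually_ge_atTop 1] with n hn
  exacts [T1nn.le_lamMax_defLap hn, T1nn.lamMax_defLap_le hn]
end

section
/- Let T be a tree with at least two vertices and let s be a real number. Then the deformed Laplacian matrix M_T(s) is positive definite if and only if |s| < 1. -/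
open Filter Topology

/-!
Root the tree at `r` and let `p v` be the neighbour of `v ≠ r` on the path to `r`. Every edge is
`{v, p v}` for exactly one `v ≠ r`, and regrouping the quadratic form edge by edge gives
`xᵀ M_T(s) x = (1 - s²) x_r² + ∑_{v ≠ r} (x_v - s x_{p v})²`.
For `s² < 1` this vanishes only if `x_r = 0` and `x_v = s x_{p v}` for all `v ≠ r`, which forces
`x = 0` by induction on the distance to `r`. For `s² ≥ 1` the vector `x_v = s ^ dist r v` kills
every square and leaves the value `1 - s² ≤ 0`.
-/

open Matrix Finset

namespace SimpleGraph

variable {V : Type*} {G : SimpleGraph V}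

lemma Reachable.exists_adj_dist_add_one {r v : V} (h : G.Reachable r v) (hne : r ≠ v) :
    ∃ u, G.Adj u v ∧ G.dist r u + 1 = G.dist r v := by
  obtain ⟨w, hw⟩ := h.symm.exists_walk_length_eq_dist
  cases w with
  | nil => exact absurd rfl hne
  | @cons _ u _ hadj q =>
    refine ⟨u, hadj.symm, le_antisymm ?_ ?_⟩
    · have : G.dist r u ≤ q.length := dist_comm (G := G) ▸ dist_le q
      rw [dist_comm (u := r) (v := v), ← hw, Walk.length_cons]
      omega
    · have := hadj.symm.reachable.dist_triangle_right r
      rwa [dist_eq_one_iff_adj.mpr hadj.symm] at this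

lemma IsAcyclic.eq_of_adj_of_dist_add_one (hG : G.IsAcyclic) {r u₁ u₂ v : V}
    (h₁ : G.Adj u₁ v) (h₂ : G.Adj u₂ v)
    (hd₁ : G.dist r u₁ + 1 = G.dist r v) (hd₂ : G.dist r u₂ + 1 = G.dist r v) : u₁ = u₂ := by
  classical
  have hreach : G.Reachable r v := Reachable.of_dist_ne_zero (by omega)
  obtain ⟨P, hP, -⟩ := hreach.exists_path_of_dist
  have eq_penultimate : ∀ u, G.Adj u v → G.dist r u + 1 = G.dist r v → u = P.penultimate := by
    intro u hu hd
    obtain ⟨Q, hQ, hQlen⟩ := (hreach.trans hu.symm.reachable).exists_path_of_dist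
    have hv : v ∉ Q.support := fun hv => by
      have := (dist_le _).trans (Q.length_takeUntil_le_length hv)
      omega
    exact hG.eq_penultimate_of_adj_end hP hu.symm
      (hG.mem_support_of_ne_mem_support_of_adj_of_isPath hP hQ hu.symm hv)
  rw [eq_penultimate u₁ h₁ hd₁, eq_penultimate u₂ h₂ hd₂]

structure IsParentMap (G : SimpleGraph V) (r : V) (p : V → V) : Prop where
  dist_parent : ∀ v ≠ r, G.dist r (p v) + 1 = G.dist r v
  adj_iff : ∀ u v, G.Adj u v ↔ (u ≠ r ∧ p u = v) ∨ (v ≠ r ∧ p v = u)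

lemma IsTree.exists_isParentMap (hG : G.IsTree) (r : V) : ∃ p, G.IsParentMap r p := by
  classical
  have : ∀ v, ∃ u, v ≠ r → G.Adj u v ∧ G.dist r u + 1 = G.dist r v := fun v =>
    if hv : v = r then ⟨r, fun h => absurd hv h⟩
    else ((hG.connected r v).exists_adj_dist_add_one (Ne.symm hv)).imp fun _ h _ => h
  choose p hp using this
  have ne_root : ∀ {u v}, G.dist r u = G.dist r v + 1 → u ≠ r := by
    rintro u v hd rfl
    simp at hd
  refine ⟨p, fun v hv => (hp v hv).2, fun u v => ⟨fun huv => ?_, ?_⟩⟩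
  · rcases hG.dist_eq_dist_add_one_of_adj r huv with hd | hd
    · have hu := ne_root hd
      exact .inl ⟨hu, hG.isAcyclic.eq_of_adj_of_dist_add_one (hp u hu).1 huv.symm
        (hp u hu).2 hd.symm⟩
    · have hv := ne_root hd
      exact .inr ⟨hv, hG.isAcyclic.eq_of_adj_of_dist_add_one (hp v hv).1 huv
        (hp v hv).2 hd.symm⟩
  · rintro (⟨hu, rfl⟩ | ⟨hv, rfl⟩)
    · exact (hp u hu).1.symm
    · exact (hp v hv).1

namespace IsParentMap

variable {r : V} {p : V → V}

lemma eq_zero_of_forall_eq_mul_parent {R : Type*} [MulZeroClass R] (hp : G.IsParentMap r p)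
    {x : V → R} {s : R} (hr : x r = 0) (h : ∀ v ≠ r, x v = s * x (p v)) : x = 0 := by
  funext v
  rw [Pi.zero_apply]
  induction hn : G.dist r v using Nat.strong_induction_on generalizing v with
  | _ n ih =>
    by_cases hv : v = r
    · rw [hv, hr]
    · have := hp.dist_parent v hv
      rw [h v hv, ih _ (by omega) (p v) rfl, mul_zero]

variable [Fintype V]

lemma sum_adj [DecidableEq V] [DecidableRel G.Adj] {M : Type*} [AddCommMonoid M]
    (hp : G.IsParentMap r p) (f : V → V → M) :
    ∑ u, ∑ v, (if G.Adj u v then f u v else 0) = ∑ v ∈ univ.erase r, (f v (p v) + f (p v) v) := by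
  have split : ∀ u v, (if G.Adj u v then f u v else 0) =
      (if u ≠ r ∧ p u = v then f u v else 0) + (if v ≠ r ∧ p v = u then f u v else 0) := by
    intro u v
    have not_both : ¬((u ≠ r ∧ p u = v) ∧ (v ≠ r ∧ p v = u)) := by
      rintro ⟨⟨hu, rfl⟩, hv, hpv⟩
      have := hp.dist_parent u hu
      have := hp.dist_parent _ hv
      rw [hpv] at this
      omega
    simp only [hp.adj_iff u v]
    by_cases h₁ : u ≠ r ∧ p u = v <;> by_cases h₂ : v ≠ r ∧ p v = u
    · exact absurd ⟨h₁, h₂⟩ not_both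
    all_goals simp [h₁, h₂]
  simp only [split, sum_add_distrib]
  rw [sum_comm (f := fun u v => if v ≠ r ∧ p v = u then f u v else 0)]
  simp [ite_and, sum_ite, filter_ne']

end IsParentMap

end SimpleGraph

section DeformedLaplacian

open SimpleGraph

variable {V : Type*} [Fintype V] [DecidableEq V] {G : SimpleGraph V}

lemma defLap_eq [DecidableRel G.Adj] (s : ℝ) :
    defLap G s = 1 - s • G.adjMatrix ℝ + s ^ 2 • (diagonal (fun v => (G.degree v : ℝ)) - 1) := by
  unfold defLap
  convert rfl

lemma isHermitian_defLap (G : SimpleGraph V) (s : ℝ) : (defLap G s).IsHermitian := by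
  classical
  rw [isHermitian_iff_isSymm, defLap_eq]
  exact (isSymm_one.sub ((G.isSymm_adjMatrix).smul s)).add
    (((isSymm_diagonal _).sub isSymm_one).smul _)

lemma dotProduct_defLap_mulVec [DecidableRel G.Adj] (s : ℝ) (x : V → ℝ) :
    x ⬝ᵥ (defLap G s *ᵥ x) = ∑ v, x v ^ 2 - s * ∑ u, ∑ v, (if G.Adj u v then x u * x v else 0)
      + s ^ 2 * (∑ u, ∑ v, (if G.Adj u v then x u ^ 2 else 0) - ∑ v, x v ^ 2) := by
  have hdeg : x ⬝ᵥ (diagonal (fun v => (G.degree v : ℝ)) *ᵥ x) =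
      ∑ u, ∑ v, if G.Adj u v then x u ^ 2 else 0 := by
    simp only [dotProduct, ← card_neighborFinset_eq_degree, neighborFinset_eq_filter,
      mulVec_diagonal, sq, sum_ite, sum_const, nsmul_eq_mul]
    exact sum_congr rfl fun v _ => by ring
  simp only [defLap_eq, add_mulVec, sub_mulVec, smul_mulVec, one_mulVec, dotProduct_add,
    dotProduct_sub, dotProduct_smul, dotProduct_mulVec_adjMatrix, smul_eq_mul, hdeg]
  simp [dotProduct, sq]

namespace SimpleGraph.IsParentMap

variable {r : V} {p : V → V}

lemma dotProduct_defLap_mulVec (hp : G.IsParentMap r p) (s : ℝ) (x : V → ℝ) :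
    x ⬝ᵥ (defLap G s *ᵥ x) =
      (1 - s ^ 2) * x r ^ 2 + ∑ v ∈ univ.erase r, (x v - s * x (p v)) ^ 2 := by
  classical
  rw [_root_.dotProduct_defLap_mulVec, hp.sum_adj, hp.sum_adj, ← add_sum_erase univ _ (mem_univ r)]
  have expand : ∑ v ∈ univ.erase r, (x v - s * x (p v)) ^ 2 =
      ∑ v ∈ univ.erase r, x v ^ 2 - s * ∑ v ∈ univ.erase r, (x v * x (p v) + x (p v) * x v)
        + s ^ 2 * ∑ v ∈ univ.erase r, x (p v) ^ 2 := by
    rw [mul_sum, mul_sum, ← sum_sub_distrib, ← sum_add_distrib]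
    exact sum_congr rfl fun v _ => by ring
  rw [expand]
  simp only [sum_add_distrib]
  ring

lemma posDef_defLap (hp : G.IsParentMap r p) {s : ℝ} (hs : s ^ 2 < 1) : (defLap G s).PosDef := by
  refine .of_dotProduct_mulVec_pos (isHermitian_defLap G s) fun x hx => ?_
  rw [star_trivial, hp.dotProduct_defLap_mulVec]
  have hroot : 0 ≤ (1 - s ^ 2) * x r ^ 2 := mul_nonneg (by linarith) (sq_nonneg _)
  have hedges : 0 ≤ ∑ v ∈ univ.erase r, (x v - s * x (p v)) ^ 2 :=
    sum_nonneg fun v _ => sq_nonneg _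
  refine (add_nonneg hroot hedges).lt_of_ne fun hzero => hx ?_
  obtain ⟨hr, he⟩ := (add_eq_zero_iff_of_nonneg hroot hedges).mp hzero.symm
  refine hp.eq_zero_of_forall_eq_mul_parent (s := s) ?_ fun v hv => ?_
  · simpa [(by linarith : 1 - s ^ 2 ≠ 0)] using hr
  · have := (sum_eq_zero_iff_of_nonneg fun v _ => sq_nonneg _).mp he v
      (mem_erase.mpr ⟨hv, mem_univ v⟩)
    exact sub_eq_zero.mp (pow_eq_zero_iff two_ne_zero |>.mp this)

lemma sq_lt_one_of_posDef_defLap (hp : G.IsParentMap r p) {s : ℝ} (h : (defLap G s).PosDef) :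
    s ^ 2 < 1 := by
  have hpos := h.dotProduct_mulVec_pos (x := fun v => s ^ G.dist r v)
    fun h0 => by simpa using congrFun h0 r
  rw [star_trivial, hp.dotProduct_defLap_mulVec, sum_eq_zero fun v hv => ?_] at hpos
  · simpa using hpos
  · simp [← hp.dist_parent v (ne_of_mem_erase hv), pow_succ']

end SimpleGraph.IsParentMap

end DeformedLaplacian

theorem stmt8_general {V : Type*} [Fintype V] [DecidableEq V] (T : SimpleGraph V)
    (hT : T.IsTree) (s : ℝ) :
    (defLap T s).PosDef ↔ |s| < 1 := by
  obtain ⟨r⟩ := hT.connected.nonempty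
  obtain ⟨p, hp⟩ := hT.exists_isParentMap r
  rw [← sq_lt_one_iff_abs_lt_one]
  exact ⟨hp.sq_lt_one_of_posDef_defLap, hp.posDef_defLap⟩

/-- for a tree `T` with at least two vertices and a real `s`,
the deformed Laplacian `M_T(s)` is positive definite if and only if `|s| < 1`. -/
theorem stmt8 {V : Type*} [Fintype V] [DecidableEq V] (T : SimpleGraph V)
    (hT : T.IsTree) (hcard : 2 ≤ Fintype.card V) (s : ℝ) :
    (defLap T s).PosDef ↔ |s| < 1 :=
  stmt8_general T hT s
end
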